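/- arXiv:2510.23253 — 3 statements merged into one kernel-verified Lean document; each statement's English description precedes it below -/
import Mathlib

section
/- For any reward function r on a finite player set N, the sum over all players of the combinatorial Shapley value formula equals r(N) − r(∅); i.e., efficiency holds for the formula φ_i(r) = Σ_{S ⊆ N \ {i}} [|S|!(n−|S|−1)!/n!](r(S∪{i}) − r(S)). -/
open Finset

theorem combinatorial_shapley_efficiency {N : Type*} [Fintype N] [DecidableEq N]
    (hn : 1 ≤ Fintype.card N) (r : Finset N → ℝ) :
    ∑ i : N,
      ∑ S ∈ (Finset.univ.erase i).powerset,
        ((Nat.factorial S.card * Nat.factorial (Fintype.card N - S.card - 1) : ℕ) : ℝ) /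
            ((Nat.factorial (Fintype.card N) : ℕ) : ℝ) *
          (r (insert i S) - r S)
      = r Finset.univ - r ∅ := by
  classical
  set n := Fintype.card N with hncard
  set w : ℕ → ℝ := fun k =>
    ((Nat.factorial k * Nat.factorial (n - k - 1) : ℕ) : ℝ) /
      ((Nat.factorial n : ℕ) : ℝ) with hw
  have hwapp : ∀ k, w k = ((Nat.factorial k * Nat.factorial (n - k - 1) : ℕ) : ℝ) /
      ((Nat.factorial n : ℕ) : ℝ) := fun k => rfl
  have hnfac : ((Nat.factorial n : ℕ) : ℝ) ≠ 0 := by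
    exact_mod_cast (Nat.factorial_pos n).ne'
  -- step 1 : per-player rewrite
  have step1 : ∀ i : N,
      (∑ S ∈ (Finset.univ.erase i).powerset, w S.card * (r (insert i S) - r S))
      = (∑ T ∈ (Finset.univ : Finset N).powerset,
            (if i ∈ T then w (T.card - 1) * r T else 0))
        - (∑ T ∈ (Finset.univ : Finset N).powerset,
            (if i ∉ T then w T.card * r T else 0)) := by
    intro i
    have hps : (Finset.univ.erase i).powerset
        = (Finset.univ : Finset N).powerset.filter (fun S => i ∉ S) := by
      ext S
      simp [Finset.mem_powerset, Finset.subset_erase]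
    simp only [mul_sub]
    rw [Finset.sum_sub_distrib]
    congr 1
    · rw [← Finset.sum_filter]
      apply Finset.sum_nbij' (fun S => insert i S) (fun T => T.erase i)
      · intro S hS
        rw [hps] at hS
        simp only [Finset.mem_filter, Finset.mem_powerset] at hS ⊢
        exact ⟨Finset.subset_univ _, Finset.mem_insert_self _ _⟩
      · intro T hT
        rw [hps]
        simp only [Finset.mem_filter, Finset.mem_powerset] at hT ⊢
        exact ⟨Finset.subset_univ _, Finset.notMem_erase _ _⟩
      · intro S hS
        rw [hps] at hS
        simp only [Finset.mem_filter] at hS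
        exact Finset.erase_insert hS.2
      · intro T hT
        simp only [Finset.mem_filter] at hT
        exact Finset.insert_erase hT.2
      · intro S hS
        rw [hps] at hS
        simp only [Finset.mem_filter] at hS
        rw [Finset.card_insert_of_notMem hS.2]
        simp
    · rw [← Finset.sum_filter, hps]
  rw [Finset.sum_congr rfl (fun i _ => step1 i), Finset.sum_sub_distrib,
    Finset.sum_comm (s := Finset.univ), Finset.sum_comm (s := Finset.univ)]
  have in1 : ∀ T : Finset N, (∑ i : N, (if i ∈ T then w (T.card - 1) * r T else 0))
      = (T.card : ℝ) * (w (T.card - 1) * r T) := by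
    intro T
    rw [Finset.sum_ite_mem, Finset.univ_inter, Finset.sum_const, nsmul_eq_mul]
  have in2 : ∀ T : Finset N, (∑ i : N, (if i ∉ T then w T.card * r T else 0))
      = ((n - T.card : ℕ) : ℝ) * (w T.card * r T) := by
    intro T
    rw [← Finset.sum_filter]
    have hc : Finset.univ.filter (fun i => i ∉ T) = Tᶜ := by
      ext x; simp
    rw [hc, Finset.sum_const, nsmul_eq_mul, Finset.card_compl]
  rw [Finset.sum_congr rfl (fun T _ => in1 T), Finset.sum_congr rfl (fun T _ => in2 T),
    ← Finset.sum_sub_distrib]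
  have huniv : (Finset.univ : Finset N) ∈ (Finset.univ : Finset N).powerset :=
    Finset.mem_powerset_self _
  rw [← Finset.add_sum_erase _ _ huniv]
  have hempty : (∅ : Finset N) ∈ ((Finset.univ : Finset N).powerset).erase Finset.univ := by
    rw [Finset.mem_erase]
    refine ⟨?_, Finset.empty_mem_powerset _⟩
    intro h
    have := congrArg Finset.card h
    simp [Finset.card_univ] at this
    omega
  rw [← Finset.add_sum_erase _ _ hempty]
  have hzero : ∀ T ∈ (((Finset.univ : Finset N).powerset).erase Finset.univ).erase ∅,
      ((T.card : ℝ) * (w (T.card - 1) * r T) - ((n - T.card : ℕ) : ℝ) * (w T.card * r T)) = 0 := by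
    intro T hT
    simp only [Finset.mem_erase, Finset.mem_powerset] at hT
    have ht1 : 1 ≤ T.card := Finset.card_pos.mpr (Finset.nonempty_iff_ne_empty.mpr hT.1)
    have ht2 : T.card < n := by
      have := Finset.card_lt_card (Finset.ssubset_univ_iff.mpr hT.2.1)
      simpa [Finset.card_univ] using this
    set t := T.card with htdef
    have hnat : t * (Nat.factorial (t - 1) * Nat.factorial (n - (t - 1) - 1))
        = (n - t) * (Nat.factorial t * Nat.factorial (n - t - 1)) := by
      have e : n - (t - 1) - 1 = n - t := by omega
      rw [e, ← mul_assoc, Nat.mul_factorial_pred (by omega)]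
      rw [mul_left_comm, Nat.mul_factorial_pred (by omega)]
    have hreal : (t : ℝ) * w (t - 1) = ((n - t : ℕ) : ℝ) * w t := by
      rw [hwapp, hwapp, ← mul_div_assoc, ← mul_div_assoc]
      congr 1
      exact_mod_cast congrArg (Nat.cast : ℕ → ℝ) hnat
    calc (t : ℝ) * (w (t - 1) * r T) - ((n - t : ℕ) : ℝ) * (w t * r T)
        = ((t : ℝ) * w (t - 1) - ((n - t : ℕ) : ℝ) * w t) * r T := by ring
      _ = 0 := by rw [hreal, sub_self, zero_mul]
  rw [Finset.sum_eq_zero hzero, add_zero]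
  have h1 : (n : ℝ) * w (n - 1) = 1 := by
    rw [hwapp]
    have h0 : n - (n - 1) - 1 = 0 := by omega
    rw [h0, Nat.factorial_zero, mul_one, ← mul_div_assoc, ← Nat.cast_mul,
      Nat.mul_factorial_pred (by omega), div_self hnfac]
  have h2 : (n : ℝ) * w 0 = 1 := by
    rw [hwapp]
    have h0 : n - 0 - 1 = n - 1 := by omega
    rw [h0, Nat.factorial_zero, one_mul, ← mul_div_assoc, ← Nat.cast_mul,
      Nat.mul_factorial_pred (by omega), div_self hnfac]
  simp only [Finset.card_univ, ← hncard, Finset.card_empty, Nat.sub_self, Nat.sub_zero,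
    Nat.cast_zero, zero_mul, mul_zero, sub_zero, zero_sub]
  linear_combination (r Finset.univ) * h1 - (r ∅) * h2
end

section
/- For the unanimity game u_T (with nonempty carrier T ⊆ N) defined by u_T(S) = 1 if T ⊆ S and 0 otherwise, the Shapley value of player i is 1/|T| if i ∈ T and 0 otherwise. -/
open Finset

/-- The set of players preceding `i` in the ordering of `N` induced by the permutation `σ`. -/
def preceding {N : Type*} [Fintype N] [LinearOrder N] (σ : Equiv.Perm N) (i : N) : Finset N :=
  Finset.univ.filter (fun j => σ.symm j < σ.symm i)

/-- The Shapley value of player `i` for the reward function `r`: the average over all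
orderings (permutations) of `N` of the marginal contribution `r (P_i ∪ {i}) - r P_i`. -/
noncomputable def shapley {N : Type*} [Fintype N] [LinearOrder N]
    (r : Finset N → ℝ) (i : N) : ℝ :=
  (1 / (Nat.factorial (Fintype.card N) : ℝ)) *
    ∑ σ : Equiv.Perm N, (r (insert i (preceding σ i)) - r (preceding σ i))

/-- Permutations in which `k` comes after all other members of `T`. -/
def fib {N : Type*} [Fintype N] [LinearOrder N] (T : Finset N) (k : N) :
    Finset (Equiv.Perm N) :=
  Finset.univ.filter (fun σ => ∀ m ∈ T, m ≠ k → σ.symm m < σ.symm k)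

lemma fib_card_eq {N : Type*} [Fintype N] [LinearOrder N] (T : Finset N)
    {i j : N} (hi : i ∈ T) (hj : j ∈ T) : (fib T i).card = (fib T j).card := by
  classical
  rcases eq_or_ne i j with rfl | hij
  · rfl
  refine Finset.card_bij' (fun σ _ => σ.trans (Equiv.swap i j))
    (fun σ _ => σ.trans (Equiv.swap i j)) ?_ ?_ ?_ ?_
  · intro σ hσ
    simp only [fib, Finset.mem_filter, Finset.mem_univ, true_and] at hσ ⊢
    intro m hm hmj
    simp only [Equiv.symm_trans_apply]
    rcases eq_or_ne m i with rfl | hmi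
    · rw [Equiv.symm_swap, Equiv.swap_apply_left, Equiv.swap_apply_right]
      exact hσ j hj hij.symm
    · rw [Equiv.symm_swap, Equiv.swap_apply_of_ne_of_ne hmi hmj, Equiv.swap_apply_right]
      exact hσ m hm hmi
  · intro σ hσ
    simp only [fib, Finset.mem_filter, Finset.mem_univ, true_and] at hσ ⊢
    intro m hm hmi
    simp only [Equiv.symm_trans_apply]
    rcases eq_or_ne m j with rfl | hmj
    · rw [Equiv.symm_swap, Equiv.swap_apply_right, Equiv.swap_apply_left]
      exact hσ i hi hij
    · rw [Equiv.symm_swap, Equiv.swap_apply_of_ne_of_ne hmi hmj, Equiv.swap_apply_left]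
      exact hσ m hm hmj
  · intro σ _
    ext x
    simp [Equiv.swap_apply_self]
  · intro σ _
    ext x
    simp [Equiv.swap_apply_self]

lemma sum_fib_card {N : Type*} [Fintype N] [LinearOrder N] (T : Finset N)
    (hT : T.Nonempty) :
    ∑ k ∈ T, (fib T k).card = Nat.factorial (Fintype.card N) := by
  classical
  have hmax : ∀ σ : Equiv.Perm N,
      σ ((T.image σ.symm).max' (hT.image σ.symm)) ∈ T := by
    intro σ
    have := Finset.max'_mem (T.image σ.symm) (hT.image σ.symm)
    rcases Finset.mem_image.mp this with ⟨m, hm, hme⟩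
    rw [← hme, Equiv.apply_symm_apply]
    exact hm
  have key := Finset.card_eq_sum_card_fiberwise
    (f := fun σ : Equiv.Perm N => σ ((T.image σ.symm).max' (hT.image σ.symm)))
    (s := Finset.univ) (t := T) (fun σ _ => hmax σ)
  have hfilter : ∀ k ∈ T, Finset.univ.filter
      (fun σ : Equiv.Perm N => σ ((T.image σ.symm).max' (hT.image σ.symm)) = k)
      = fib T k := by
    intro k hk
    ext σ
    simp only [Finset.mem_filter, Finset.mem_univ, true_and, fib]
    constructor
    · intro h m hm hmk
      have hle : σ.symm m ≤ (T.image σ.symm).max' (hT.image σ.symm) :=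
        Finset.le_max' _ _ (Finset.mem_image_of_mem _ hm)
      have heq : σ.symm k = (T.image σ.symm).max' (hT.image σ.symm) := by
        rw [← h, Equiv.symm_apply_apply]
      rw [heq]
      exact lt_of_le_of_ne hle (by
        rw [← heq]
        exact fun e => hmk (σ.symm.injective e))
    · intro h
      by_contra hne
      have hmem := hmax σ
      have := h _ hmem hne
      have hle : σ.symm k ≤ (T.image σ.symm).max' (hT.image σ.symm) :=
        Finset.le_max' _ _ (Finset.mem_image_of_mem _ hk)
      rw [Equiv.symm_apply_apply] at this
      exact absurd hle (not_le.mpr this)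
  have h2 : ∑ k ∈ T, (fib T k).card = (Finset.univ : Finset (Equiv.Perm N)).card := by
    rw [key]
    exact Finset.sum_congr rfl (fun k hk => by rw [hfilter k hk])
  rw [h2]
  simp [Fintype.card_perm]

theorem shapley_unanimity_game {N : Type*} [Fintype N] [LinearOrder N]
    (T : Finset N) (hT : T.Nonempty) (i : N) :
    shapley (fun S => if T ⊆ S then (1 : ℝ) else 0) i =
      if i ∈ T then 1 / (T.card : ℝ) else 0 := by
  classical
  unfold shapley
  by_cases hi : i ∈ T
  · rw [if_pos hi]
    have hiP : ∀ σ : Equiv.Perm N, i ∉ preceding σ i := by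
      intro σ
      simp [preceding]
    have hterm : ∀ σ : Equiv.Perm N,
        ((if T ⊆ insert i (preceding σ i) then (1:ℝ) else 0) -
         (if T ⊆ preceding σ i then (1:ℝ) else 0)) =
        if σ ∈ fib T i then 1 else 0 := by
      intro σ
      have h2 : ¬ T ⊆ preceding σ i := fun h => hiP σ (h hi)
      rw [if_neg h2, sub_zero]
      congr 1
      simp only [fib, Finset.mem_filter, Finset.mem_univ, true_and, eq_iff_iff]
      constructor
      · intro h m hm hmi
        have := h hm
        rcases Finset.mem_insert.mp this with rfl | hmem
        · exact absurd rfl hmi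
        · simpa [preceding] using hmem
      · intro h m hm
        rcases eq_or_ne m i with rfl | hmi
        · exact Finset.mem_insert_self _ _
        · exact Finset.mem_insert_of_mem (by simp [preceding, h m hm hmi])
    simp only [hterm]
    rw [Finset.sum_boole]
    have hcard : (fib T i).card * T.card = Nat.factorial (Fintype.card N) := by
      have := sum_fib_card T hT
      rw [Finset.sum_congr rfl (fun k hk => fib_card_eq T hk hi)] at this
      rw [Finset.sum_const, smul_eq_mul, mul_comm] at this
      exact this
    have hfilt : Finset.univ.filter (fun σ => σ ∈ fib T i) = fib T i := by
      ext σ; simp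
    rw [hfilt]
    have hfac : (Nat.factorial (Fintype.card N) : ℝ) ≠ 0 := by
      exact_mod_cast Nat.factorial_ne_zero _
    have hTc : (T.card : ℝ) ≠ 0 := by
      exact_mod_cast Finset.card_ne_zero_of_mem hi
    have hcR : ((fib T i).card : ℝ) * (T.card : ℝ) = (Nat.factorial (Fintype.card N) : ℝ) := by
      exact_mod_cast hcard
    field_simp
    linarith [hcR]
  · rw [if_neg hi]
    have : ∀ σ : Equiv.Perm N,
        ((if T ⊆ insert i (preceding σ i) then (1:ℝ) else 0) -
         (if T ⊆ preceding σ i then (1:ℝ) else 0)) = 0 := by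
      intro σ
      simp only [Finset.subset_insert_iff_of_notMem hi, sub_self]
    simp only [this]
    simp
end

section
/- Uniqueness of the Shapley value: any map ψ assigning to each game r : 2^N → ℝ (with r(∅) = 0) a vector (ψ_i(r))_{i ∈ N} that satisfies efficiency (Σ_i ψ_i(r) = r(N)), symmetry, linearity (additivity and homogeneity in r), and the null player property must coincide with the Shapley value: ψ_i(r) = φ_i(r) for all i and r. -/
open Finset

set_option linter.unusedSectionVars false

namespace ShapleyAux
variable {N : Type*} [Fintype N] [LinearOrder N]

/-- unanimity game -/
def uGame (T S : Finset N) : ℝ := if T ⊆ S then 1 else 0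

/-- Harsanyi dividend -/
def hdiv (r : Finset N → ℝ) (T : Finset N) : ℝ :=
  ∑ S ∈ T.powerset, (-1:ℝ)^(T.card - S.card) * r S

lemma mobius (r : Finset N → ℝ) (S : Finset N) :
    ∑ T ∈ S.powerset, hdiv r T = r S := by
  unfold hdiv
  rw [Finset.sum_comm' (t' := S.powerset) (s' := fun U => S.powerset.filter (fun T => U ⊆ T))
    (by
      intro T U
      simp only [mem_powerset, mem_filter]
      constructor
      · rintro ⟨h1, h2⟩; exact ⟨⟨h1, h2⟩, h2.trans h1⟩
      · rintro ⟨⟨h1, h2⟩, _⟩; exact ⟨h1, h2⟩)]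
  have inner : ∀ U ∈ S.powerset,
      ∑ T ∈ S.powerset.filter (fun T => U ⊆ T), (-1:ℝ)^(T.card - U.card) * r U
        = if U = S then r S else 0 := by
    intro U hU
    rw [mem_powerset] at hU
    rw [← Finset.sum_mul]
    have himg : S.powerset.filter (fun T => U ⊆ T)
        = (S \ U).powerset.image (fun V => U ∪ V) := by
      ext T
      simp only [mem_filter, mem_powerset, mem_image]
      constructor
      · rintro ⟨hTS, hUT⟩
        exact ⟨T \ U, sdiff_subset_sdiff hTS Subset.rfl, Finset.union_sdiff_of_subset hUT⟩
      · rintro ⟨V, hV, rfl⟩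
        exact ⟨union_subset hU (hV.trans (sdiff_subset)), subset_union_left⟩
    rw [himg, Finset.sum_image (by
      intro V1 h1 V2 h2 he
      have d1 : Disjoint U V1 := (Finset.disjoint_of_subset_left (mem_powerset.1 h1) sdiff_disjoint).symm
      have d2 : Disjoint U V2 := (Finset.disjoint_of_subset_left (mem_powerset.1 h2) sdiff_disjoint).symm
      have := congrArg (fun W => W \ U) he
      simpa [Finset.union_sdiff_cancel_left d1, Finset.union_sdiff_cancel_left d2] using this)]
    have hcard : ∀ V ∈ (S \ U).powerset, (-1:ℝ)^((U ∪ V).card - U.card) = (-1:ℝ)^V.card := by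
      intro V hV
      have d : Disjoint U V := (Finset.disjoint_of_subset_left (mem_powerset.1 hV) sdiff_disjoint).symm
      rw [Finset.card_union_of_disjoint d, Nat.add_sub_cancel_left]
    rw [Finset.sum_congr rfl hcard]
    have key : ∑ V ∈ (S \ U).powerset, (-1:ℝ)^V.card = if S \ U = ∅ then 1 else 0 := by
      have h := Finset.sum_powerset_neg_one_pow_card (x := S \ U)
      have h2 := congrArg (fun z : ℤ => (z : ℝ)) h
      push_cast at h2
      rw [h2]
    rw [key]
    by_cases hUS : U = S
    · simp [hUS]
    · have : S \ U ≠ ∅ := by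
        intro h
        exact hUS (Finset.Subset.antisymm hU (by rwa [← Finset.sdiff_eq_empty_iff_subset]))
      simp [this, hUS]
  rw [Finset.sum_congr rfl inner, Finset.sum_ite_eq' S.powerset S (fun _ => r S)]
  simp


lemma uGame_empty {T : Finset N} (hT : T.Nonempty) : uGame T (∅ : Finset N) = 0 := by
  simp [uGame, Finset.subset_empty, Finset.nonempty_iff_ne_empty.1 hT]

lemma decomp (r : Finset N → ℝ) (h0 : r ∅ = 0) (S : Finset N) :
    ∑ T ∈ Finset.univ.powerset.filter (fun T : Finset N => T.Nonempty),
      hdiv r T * uGame T S = r S := by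
  have h1 : ∑ T ∈ (Finset.univ : Finset N).powerset, hdiv r T * uGame T S
      = ∑ T ∈ Finset.univ.powerset.filter (fun T : Finset N => T.Nonempty),
          hdiv r T * uGame T S := by
    rw [← Finset.sum_filter_add_sum_filter_not _ (fun T : Finset N => T.Nonempty)]
    have : ∀ T ∈ (Finset.univ : Finset N).powerset.filter (fun T => ¬ T.Nonempty),
        hdiv r T * uGame T S = 0 := by
      intro T hT
      simp only [mem_filter, Finset.not_nonempty_iff_eq_empty] at hT
      simp [hT.2, hdiv, h0]
    rw [Finset.sum_eq_zero this, add_zero]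
  rw [← h1]
  have h2 : ∀ T ∈ (Finset.univ : Finset N).powerset,
      hdiv r T * uGame T S = if T ∈ S.powerset then hdiv r T else 0 := by
    intro T _
    by_cases h : T ⊆ S <;> simp [uGame, h, mem_powerset]
  rw [Finset.sum_congr rfl h2, Finset.sum_ite_mem, Finset.inter_eq_right.2
    (Finset.powerset_mono.2 (Finset.subset_univ S)), mobius]


lemma char (ψ : (Finset N → ℝ) → N → ℝ)
    (heff : ∀ r : Finset N → ℝ, r ∅ = 0 → ∑ i : N, ψ r i = r Finset.univ)
    (hsym : ∀ r : Finset N → ℝ, r ∅ = 0 → ∀ i j : N,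
      (∀ S : Finset N, i ∉ S → j ∉ S → r (insert i S) = r (insert j S)) → ψ r i = ψ r j)
    (hadd : ∀ r t : Finset N → ℝ, r ∅ = 0 → t ∅ = 0 → ∀ i : N,
      ψ (fun S => r S + t S) i = ψ r i + ψ t i)
    (hsmul : ∀ (a : ℝ) (r : Finset N → ℝ), r ∅ = 0 → ∀ i : N,
      ψ (fun S => a * r S) i = a * ψ r i)
    (hnull : ∀ r : Finset N → ℝ, r ∅ = 0 → ∀ i : N,
      (∀ S : Finset N, i ∉ S → r (insert i S) = r S) → ψ r i = 0) :
    ∀ r : Finset N → ℝ, r ∅ = 0 → ∀ i : N,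
      ψ r i = ∑ T ∈ Finset.univ.powerset.filter (fun T : Finset N => T.Nonempty),
        hdiv r T * (if i ∈ T then 1 / (T.card : ℝ) else 0) := by
  -- ψ of the zero game is 0
  have hzero : ∀ i : N, ψ (fun _ => 0) i = 0 := by
    intro i
    have h := hsmul 0 (fun _ => 0) rfl i
    have e : (fun (_ : Finset N) => (0:ℝ) * (0:ℝ)) = (fun _ => (0:ℝ)) := by
      funext S; ring
    rw [e] at h
    simpa using h
  -- ψ of a unanimity game
  have hu : ∀ T : Finset N, T.Nonempty → ∀ i : N,
      ψ (uGame T) i = if i ∈ T then 1 / (T.card : ℝ) else 0 := by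
    intro T hT i
    have hU0 : uGame T (∅ : Finset N) = 0 := uGame_empty hT
    by_cases hi : i ∈ T
    · -- all players in T get the same value
      have hconst : ∀ j ∈ T, ψ (uGame T) j = ψ (uGame T) i := by
        intro j hj
        rcases eq_or_ne j i with rfl | hne
        · rfl
        · refine hsym (uGame T) hU0 j i ?_
          intro S hjS hiS
          by_cases hsub : T ⊆ insert j S
          · exfalso
            have := hsub hi
            rw [Finset.mem_insert] at this
            rcases this with h | h
            · exact hne h.symm
            · exact hiS h
          · have hsub2 : ¬ T ⊆ insert i S := by
              intro h
              have := h hj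
              rw [Finset.mem_insert] at this
              rcases this with h' | h'
              · exact hne h'
              · exact hjS h'
            simp [uGame, hsub, hsub2]
      -- null players outside T
      have hnullT : ∀ j : N, j ∉ T → ψ (uGame T) j = 0 := by
        intro j hj
        refine hnull (uGame T) hU0 j ?_
        intro S hjS
        have : T ⊆ insert j S ↔ T ⊆ S := by
          constructor
          · intro h x hx
            have := h hx
            rw [Finset.mem_insert] at this
            rcases this with h' | h'
            · exact absurd (h' ▸ hx) hj
            · exact h'
          · intro h; exact h.trans (Finset.subset_insert _ _)
        simp [uGame, this]
      have heq := heff (uGame T) hU0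
      have hugu : uGame T (Finset.univ : Finset N) = 1 := by
        simp [uGame]
      rw [hugu] at heq
      rw [← Finset.sum_filter_add_sum_filter_not Finset.univ (fun j => j ∈ T)] at heq
      have h2 : ∑ j ∈ Finset.univ.filter (fun j => j ∉ T), ψ (uGame T) j = 0 :=
        Finset.sum_eq_zero (fun j hj => hnullT j (Finset.mem_filter.1 hj).2)
      have h3 : Finset.univ.filter (fun j => j ∈ T) = T := by
        ext j; simp
      rw [h2, add_zero, h3, Finset.sum_congr rfl (fun j hj => hconst j hj),
        Finset.sum_const, nsmul_eq_mul] at heq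
      have hcard : (T.card : ℝ) ≠ 0 := by
        simp [Finset.card_ne_zero_of_mem hi]
      rw [if_pos hi]
      field_simp at heq ⊢
      linarith [heq]
    · rw [if_neg hi]
      refine hnull (uGame T) hU0 i ?_
      intro S hiS
      have : T ⊆ insert i S ↔ T ⊆ S := by
        constructor
        · intro h x hx
          have := h hx
          rw [Finset.mem_insert] at this
          rcases this with h' | h'
          · exact absurd (h' ▸ hx) hi
          · exact h'
        · intro h; exact h.trans (Finset.subset_insert _ _)
      simp [uGame, this]
  -- linearity over finite sums
  have hlinsum : ∀ (A : Finset (Finset N)) (c : Finset N → ℝ) (g : Finset N → Finset N → ℝ),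
      (∀ T ∈ A, g T ∅ = 0) → ∀ i : N,
      ψ (fun S => ∑ T ∈ A, c T * g T S) i = ∑ T ∈ A, c T * ψ (g T) i := by
    intro A
    induction A using Finset.induction_on with
    | empty =>
      intro c g _ i
      simpa using hzero i
    | insert a B hx ih =>
      intro c g hg i
      have e : (fun S => ∑ T ∈ insert a B, c T * g T S)
          = (fun S => c a * g a S + ∑ T ∈ B, c T * g T S) := by
        funext S
        rw [Finset.sum_insert hx]
      rw [e, hadd (fun S => c a * g a S) (fun S => ∑ T ∈ B, c T * g T S)
        (by simp [hg a (Finset.mem_insert_self a B)])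
        (by exact Finset.sum_eq_zero (fun T hT => by
          simp [hg T (Finset.mem_insert_of_mem hT)])) i,
        hsmul (c a) (g a) (hg a (Finset.mem_insert_self a B)) i,
        ih c g (fun T hT => hg T (Finset.mem_insert_of_mem hT)) i,
        Finset.sum_insert hx]
  -- conclusion
  intro r h0 i
  have hr : r = fun S => ∑ T ∈ Finset.univ.powerset.filter (fun T : Finset N => T.Nonempty),
      hdiv r T * uGame T S := by
    funext S
    rw [decomp r h0 S]
  calc ψ r i = ψ (fun S => ∑ T ∈ Finset.univ.powerset.filter
        (fun T : Finset N => T.Nonempty), hdiv r T * uGame T S) i := by rw [← hr]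
    _ = ∑ T ∈ Finset.univ.powerset.filter (fun T : Finset N => T.Nonempty),
        hdiv r T * ψ (uGame T) i := by
      refine hlinsum _ _ _ ?_ i
      intro T hT
      exact uGame_empty (Finset.mem_filter.1 hT).2
    _ = _ := by
      refine Finset.sum_congr rfl ?_
      intro T hT
      rw [hu T (Finset.mem_filter.1 hT).2 i]


lemma not_mem_preceding (σ : Equiv.Perm N) (i : N) : i ∉ preceding σ i := by
  simp [preceding]

lemma shapley_null (r : Finset N → ℝ) (i : N)
    (h : ∀ S : Finset N, i ∉ S → r (insert i S) = r S) : shapley r i = 0 := by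
  unfold shapley
  have : ∀ σ : Equiv.Perm N,
      r (insert i (preceding σ i)) - r (preceding σ i) = 0 := by
    intro σ
    rw [h (preceding σ i) (not_mem_preceding σ i)]
    ring
  simp [this]

lemma shapley_add (r t : Finset N → ℝ) (i : N) :
    shapley (fun S => r S + t S) i = shapley r i + shapley t i := by
  unfold shapley
  rw [← mul_add, ← Finset.sum_add_distrib]
  congr 1
  refine Finset.sum_congr rfl fun σ _ => ?_
  ring

lemma shapley_smul (a : ℝ) (r : Finset N → ℝ) (i : N) :
    shapley (fun S => a * r S) i = a * shapley r i := by
  unfold shapley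
  simp only []
  rw [show (∑ σ : Equiv.Perm N, (a * r (insert i (preceding σ i)) - a * r (preceding σ i)))
      = a * ∑ σ : Equiv.Perm N, (r (insert i (preceding σ i)) - r (preceding σ i)) by
    rw [Finset.mul_sum]
    exact Finset.sum_congr rfl fun σ _ => by ring]
  ring


lemma shapley_eff (r : Finset N → ℝ) (h0 : r ∅ = 0) :
    ∑ i : N, shapley r i = r Finset.univ := by
  classical
  set n := Fintype.card N with hn
  let e : Fin n ≃o N := monoEquivOfFin N hn.symm
  have key : ∀ σ : Equiv.Perm N,
      ∑ i : N, (r (insert i (preceding σ i)) - r (preceding σ i)) = r Finset.univ := by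
    intro σ
    set F : ℕ → Finset N :=
      fun m => Finset.univ.filter (fun j => ((e.symm (σ.symm j) : Fin n) : ℕ) < m) with hF
    have hpre : ∀ i : N, preceding σ i = F ((e.symm (σ.symm i) : Fin n) : ℕ) := by
      intro i
      ext j
      simp only [preceding, hF, mem_filter, mem_univ, true_and]
      rw [← OrderIso.lt_iff_lt e.symm, Fin.lt_def]
    have hins : ∀ i : N,
        insert i (preceding σ i) = F (((e.symm (σ.symm i) : Fin n) : ℕ) + 1) := by
      intro i
      ext j
      simp only [hF, Finset.mem_insert, preceding, mem_filter, mem_univ, true_and,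
        Nat.lt_succ_iff]
      constructor
      · rintro (rfl | h)
        · exact le_refl _
        · exact le_of_lt (by rw [← Fin.lt_def, OrderIso.lt_iff_lt e.symm]; exact h)
      · intro h
        rcases lt_or_eq_of_le h with h | h
        · right
          rw [← Fin.lt_def, OrderIso.lt_iff_lt e.symm] at h
          exact h
        · left
          have : e.symm (σ.symm j) = e.symm (σ.symm i) := Fin.ext h
          have := e.symm.injective this
          exact σ.symm.injective this
    have hreidx : ∑ i : N, (r (insert i (preceding σ i)) - r (preceding σ i))
        = ∑ k : Fin n, (r (F ((k : ℕ) + 1)) - r (F (k : ℕ))) := by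
      refine (Fintype.sum_equiv (e.toEquiv.trans (σ : N ≃ N))
        (fun k => r (F ((k : ℕ) + 1)) - r (F (k : ℕ)))
        (fun i => r (insert i (preceding σ i)) - r (preceding σ i)) ?_).symm
      intro k
      have hk : e.symm (σ.symm ((e.toEquiv.trans (σ : N ≃ N)) k)) = k := by
        simp
      beta_reduce
      rw [hins, hpre, hk]
    rw [hreidx, Fin.sum_univ_eq_sum_range (fun m => r (F (m + 1)) - r (F m)) n,
      Finset.sum_range_sub (fun m => r (F m)) n]
    have hFn : F n = Finset.univ := by
      ext j; simp [hF, Fin.is_lt]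
    have hF0 : F 0 = ∅ := by
      ext j; simp [hF]
    rw [hFn, hF0, h0, sub_zero]
  unfold shapley
  rw [← Finset.mul_sum, Finset.sum_comm, Finset.sum_congr rfl (fun σ _ => key σ),
    Finset.sum_const, Finset.card_univ, Fintype.card_perm, nsmul_eq_mul]
  have : ((n.factorial : ℝ)) ≠ 0 := by
    exact_mod_cast Nat.factorial_ne_zero n
  field_simp


lemma shapley_sym (r : Finset N → ℝ) (i j : N)
    (h : ∀ S : Finset N, i ∉ S → j ∉ S → r (insert i S) = r (insert j S)) :
    shapley r i = shapley r j := by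
  rcases eq_or_ne i j with rfl | hij
  · rfl
  unfold shapley
  congr 1
  set τ := Equiv.swap i j with hτ
  refine Fintype.sum_bijective (fun σ : Equiv.Perm N => τ * σ)
    (Group.mulLeft_bijective τ)
    (fun σ => r (insert i (preceding σ i)) - r (preceding σ i))
    (fun σ => r (insert j (preceding σ j)) - r (preceding σ j)) ?_
  intro σ
  beta_reduce
  set P := preceding σ i with hP
  have hiP : i ∉ P := not_mem_preceding σ i
  have hτs : τ.symm = τ := Equiv.symm_swap i j
  have happ : ∀ k : N, (τ * σ).symm k = σ.symm (τ k) := by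
    intro k
    rw [Equiv.Perm.mul_def, Equiv.symm_trans_apply, hτs]
  have hQ : preceding (τ * σ) j = P.image τ := by
    ext k
    simp only [preceding, mem_filter, mem_univ, true_and, happ]
    rw [show τ j = i from Equiv.swap_apply_right i j]
    constructor
    · intro hk
      refine Finset.mem_image.2 ⟨τ k, ?_, ?_⟩
      · rw [hP]; simp only [preceding, mem_filter, mem_univ, true_and]; exact hk
      · simp [hτ]
    · intro hk
      rcases Finset.mem_image.1 hk with ⟨m, hm, rfl⟩
      rw [hP] at hm
      simp only [preceding, mem_filter, mem_univ, true_and] at hm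
      rw [show τ (τ m) = m by simp [hτ]]
      exact hm
  rw [hQ]
  by_cases hjP : j ∈ P
  · have himg : P.image τ = insert i (P.erase j) := by
      ext k
      simp only [Finset.mem_image, Finset.mem_insert, Finset.mem_erase]
      constructor
      · rintro ⟨m, hm, rfl⟩
        rcases eq_or_ne m i with hmi | hmi
        · exact absurd (hmi ▸ hm) hiP
        rcases eq_or_ne m j with hmj | hmj
        · left; rw [hmj]; exact Equiv.swap_apply_right i j
        · right
          rw [hτ, Equiv.swap_apply_of_ne_of_ne hmi hmj]
          exact ⟨hmj, hm⟩
      · rintro (hk | ⟨hkj, hkP⟩)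
        · exact ⟨j, hjP, by rw [hk]; exact Equiv.swap_apply_right i j⟩
        · refine ⟨k, hkP, ?_⟩
          have hki : k ≠ i := fun hk => hiP (by rw [← hk]; exact hkP)
          rw [hτ, Equiv.swap_apply_of_ne_of_ne hki hkj]
    rw [himg]
    have h1 : insert j (insert i (P.erase j)) = insert i P := by
      rw [Finset.insert_comm, Finset.insert_erase hjP]
    rw [h1, h (P.erase j) (fun hk => hiP (Finset.mem_of_mem_erase hk)) (Finset.notMem_erase j P),
      Finset.insert_erase hjP]
  · have himg : P.image τ = P := by
      ext k
      simp only [Finset.mem_image]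
      constructor
      · rintro ⟨m, hm, rfl⟩
        rwa [hτ, Equiv.swap_apply_of_ne_of_ne (fun hk => hiP (by rw [← hk]; exact hm))
          (fun hk => hjP (by rw [← hk]; exact hm))]
      · intro hk
        refine ⟨k, hk, ?_⟩
        rw [hτ, Equiv.swap_apply_of_ne_of_ne (fun hk' => hiP (by rw [← hk']; exact hk))
          (fun hk' => hjP (by rw [← hk']; exact hk))]
    rw [himg, h P hiP hjP]

end ShapleyAux

theorem shapley_uniqueness {N : Type*} [Fintype N] [LinearOrder N]
    (ψ : (Finset N → ℝ) → N → ℝ)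
    (heff : ∀ r : Finset N → ℝ, r ∅ = 0 → ∑ i : N, ψ r i = r Finset.univ)
    (hsym : ∀ r : Finset N → ℝ, r ∅ = 0 → ∀ i j : N,
      (∀ S : Finset N, i ∉ S → j ∉ S → r (insert i S) = r (insert j S)) → ψ r i = ψ r j)
    (hadd : ∀ r t : Finset N → ℝ, r ∅ = 0 → t ∅ = 0 → ∀ i : N,
      ψ (fun S => r S + t S) i = ψ r i + ψ t i)
    (hsmul : ∀ (a : ℝ) (r : Finset N → ℝ), r ∅ = 0 → ∀ i : N,
      ψ (fun S => a * r S) i = a * ψ r i)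
    (hnull : ∀ r : Finset N → ℝ, r ∅ = 0 → ∀ i : N,
      (∀ S : Finset N, i ∉ S → r (insert i S) = r S) → ψ r i = 0) :
    ∀ r : Finset N → ℝ, r ∅ = 0 → ∀ i : N, ψ r i = shapley r i := by
  intro r h0 i
  rw [ShapleyAux.char ψ heff hsym hadd hsmul hnull r h0 i]
  exact (ShapleyAux.char shapley
    (fun r h0 => ShapleyAux.shapley_eff r h0)
    (fun r _ i j hs => ShapleyAux.shapley_sym r i j hs)
    (fun r t _ _ i => ShapleyAux.shapley_add r t i)
    (fun a r _ i => ShapleyAux.shapley_smul a r i)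
    (fun r _ i hn => ShapleyAux.shapley_null r i hn) r h0 i).symm
end
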